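/- arXiv:2110.04703 — 5 statements merged into one kernel-verified Lean document; each statement's English description precedes it below -/
import Mathlib

section
/- Let A ∈ ℝ^{m×n} have no zero rows, let x⋆ ∈ ℝ^n lie in the row space of A, and set b = A x⋆. Let p_1,...,p_m > 0, let D = Diag(‖A_1‖,...,‖A_m‖) and P = Diag(p_1,...,p_m), and let σ ≥ 0 be a constant such that ‖P^{1/2} D^{-1} A v‖² ≥ σ² ‖v‖² for every v in the row space of A. Let x ∈ ℝ^n be such that x - x⋆ lies in the row space of A, and let S ⊆ {1,...,m} be a selectable set for x, i.e. i ∉ S implies A_i x = b_i, with ∑_{j∈S} p_j > 0. For i ∈ S let x'(i) denote the Kaczmarz update of x with row i. Then ∑_{i∈S} (p_i / ∑_{j∈S} p_j) ‖x'(i) - x⋆‖² ≤ (1 - σ² / ∑_{j∈S} p_j) ‖x - x⋆‖². -/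
/-!
A Kaczmarz step is the orthogonal projection of `x` onto the hyperplane `⟪Aᵢ, ·⟫ = bᵢ`, which
contains `x⋆`; by Pythagoras it lowers the squared error `‖x - x⋆‖²` by exactly
`⟪Aᵢ, x - x⋆⟫² / ‖Aᵢ‖²`. Rows outside the selectable set have zero residual, so the
`p`-weighted sum of these decreases over `S` equals `‖P^{1/2} D⁻¹ A (x - x⋆)‖²`, which is at
least `σ² ‖x - x⋆‖²` because `x - x⋆` lies in the row space.
-/

open RealInnerProductSpace

theorem sum_div_mul_sub_le {ι : Type*} (S : Finset ι) (p r : ι → ℝ) (c s : ℝ)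
    (hT : 0 < ∑ j ∈ S, p j) (hs : s * c ≤ ∑ i ∈ S, p i * r i) :
    ∑ i ∈ S, (p i / ∑ j ∈ S, p j) * (c - r i) ≤ (1 - s / ∑ j ∈ S, p j) * c := by
  set T := ∑ j ∈ S, p j
  have haverage : ∑ i ∈ S, (p i / T) * (c - r i) = c - (∑ i ∈ S, p i * r i) / T := by
    simp only [mul_sub, Finset.sum_sub_distrib, ← Finset.sum_mul, ← Finset.sum_div,
      div_mul_eq_mul_div]
    rw [mul_div_right_comm, div_self hT.ne', one_mul]
  rw [haverage, sub_mul, one_mul, div_mul_eq_mul_div]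
  gcongr

section InnerProductSpace

variable {E : Type*} [NormedAddCommGroup E] [InnerProductSpace ℝ E]

theorem norm_sub_inner_div_smul_sq (a e : E) :
    ‖e - (⟪a, e⟫ / ‖a‖ ^ 2) • a‖ ^ 2 = ‖e‖ ^ 2 - ⟪a, e⟫ ^ 2 / ‖a‖ ^ 2 := by
  rcases eq_or_ne a 0 with rfl | ha
  · simp
  have ha' : ‖a‖ ≠ 0 := norm_ne_zero_iff.mpr ha
  rw [norm_sub_sq_real, real_inner_smul_right, norm_smul, mul_pow, Real.norm_eq_abs, sq_abs,
    real_inner_comm e a]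
  field_simp
  ring

theorem norm_kaczmarz_update_sub_sq (a x xstar : E) :
    ‖(x - ((⟪a, x⟫ - ⟪a, xstar⟫) / ‖a‖ ^ 2) • a) - xstar‖ ^ 2
      = ‖x - xstar‖ ^ 2 - ⟪a, x - xstar⟫ ^ 2 / ‖a‖ ^ 2 := by
  rw [← norm_sub_inner_div_smul_sq, inner_sub_right, sub_right_comm]

theorem sum_sqrt_div_norm_mul_inner_sq_eq {ι : Type*} [Fintype ι] (A : ι → E) (p : ι → ℝ) (hp : ∀ i, 0 ≤ p i) (e : E)
    (S : Finset ι) (hS : ∀ i ∉ S, ⟪A i, e⟫ = 0) :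
    ∑ i, (Real.sqrt (p i) / ‖A i‖ * ⟪A i, e⟫) ^ 2 = ∑ i ∈ S, p i * (⟪A i, e⟫ ^ 2 / ‖A i‖ ^ 2) := by
  rw [← Finset.sum_subset (Finset.subset_univ S) fun i _ hi => by simp [hS i hi]]
  refine Finset.sum_congr rfl fun i _ => ?_
  rw [mul_pow, div_pow, Real.sq_sqrt (hp i)]
  ring

end InnerProductSpace

theorem ssrk_one_step_general {m n : ℕ}
    (A : Fin m → EuclideanSpace ℝ (Fin n))
    (xstar : EuclideanSpace ℝ (Fin n))
    (b : Fin m → ℝ) (hb : ∀ i, b i = ⟪A i, xstar⟫)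
    (p : Fin m → ℝ) (hp : ∀ i, 0 < p i)
    (σ : ℝ)
    (hsv : ∀ v ∈ Submodule.span ℝ (Set.range A),
      σ ^ 2 * ‖v‖ ^ 2 ≤ ∑ i, (Real.sqrt (p i) / ‖A i‖ * ⟪A i, v⟫) ^ 2)
    (x : EuclideanSpace ℝ (Fin n))
    (hx : x - xstar ∈ Submodule.span ℝ (Set.range A))
    (S : Finset (Fin m)) (hS : ∀ i, i ∉ S → ⟪A i, x⟫ = b i)
    (hSpos : 0 < ∑ j ∈ S, p j) :
    ∑ i ∈ S, (p i / ∑ j ∈ S, p j) *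
        ‖(x - ((⟪A i, x⟫ - b i) / ‖A i‖ ^ 2) • A i) - xstar‖ ^ 2 ≤
      (1 - σ ^ 2 / ∑ j ∈ S, p j) * ‖x - xstar‖ ^ 2 := by
  have hres : ∀ i ∉ S, ⟪A i, x - xstar⟫ = 0 := fun i hi => by
    rw [inner_sub_right, hS i hi, hb i, sub_self]
  have hdecrease : σ ^ 2 * ‖x - xstar‖ ^ 2
      ≤ ∑ i ∈ S, p i * (⟪A i, x - xstar⟫ ^ 2 / ‖A i‖ ^ 2) := by
    rw [← sum_sqrt_div_norm_mul_inner_sq_eq A p (fun i => (hp i).le) _ S hres]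
    exact hsv _ hx
  simp only [hb, norm_kaczmarz_update_sub_sq]
  exact sum_div_mul_sub_le S p _ _ _ hSpos hdecrease

/-- (Theorem 1 of the paper, one step.) With positive probabilities
`p₁,…,p_m`, a constant `σ ≥ 0` satisfying `‖P^{1/2} D⁻¹ A v‖² ≥ σ² ‖v‖²` for all `v` in
the row space of `A` (here the rows of `P^{1/2} D⁻¹ A` are `(√pᵢ/‖Aᵢ‖) Aᵢ`), and a
selectable set `S` for the iterate `x` with `∑_{j∈S} pⱼ > 0`, the conditional expected
squared error of the Selectable Set Randomized Kaczmarz update satisfies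
`∑_{i∈S} (pᵢ/∑_{j∈S} pⱼ) ‖x'(i) - x⋆‖² ≤ (1 - σ²/∑_{j∈S} pⱼ) ‖x - x⋆‖²`. -/
theorem ssrk_one_step {m n : ℕ}
    (A : Fin m → EuclideanSpace ℝ (Fin n)) (hA : ∀ i, A i ≠ 0)
    (xstar : EuclideanSpace ℝ (Fin n))
    (hxstar : xstar ∈ Submodule.span ℝ (Set.range A))
    (b : Fin m → ℝ) (hb : ∀ i, b i = ⟪A i, xstar⟫)
    (p : Fin m → ℝ) (hp : ∀ i, 0 < p i)
    (σ : ℝ) (hσ : 0 ≤ σ)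
    (hsv : ∀ v ∈ Submodule.span ℝ (Set.range A),
      σ ^ 2 * ‖v‖ ^ 2 ≤ ∑ i, (Real.sqrt (p i) / ‖A i‖ * ⟪A i, v⟫) ^ 2)
    (x : EuclideanSpace ℝ (Fin n))
    (hx : x - xstar ∈ Submodule.span ℝ (Set.range A))
    (S : Finset (Fin m)) (hS : ∀ i, i ∉ S → ⟪A i, x⟫ = b i)
    (hSpos : 0 < ∑ j ∈ S, p j) :
    ∑ i ∈ S, (p i / ∑ j ∈ S, p j) *
        ‖(x - ((⟪A i, x⟫ - b i) / ‖A i‖ ^ 2) • A i) - xstar‖ ^ 2 ≤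
      (1 - σ ^ 2 / ∑ j ∈ S, p j) * ‖x - xstar‖ ^ 2 :=
  ssrk_one_step_general A xstar b hb p hp σ hsv x hx S hS hSpos
end

section
/- Let A ∈ ℝ^{m×n} with m ≥ 2 have no zero rows, let x⋆ ∈ ℝ^n lie in the row space of A, and set b = A x⋆. Let D = Diag(‖A_1‖,...,‖A_m‖) and let σ ≥ 0 be a constant such that ‖D^{-1} A v‖² ≥ σ² ‖v‖² for every v in the row space of A. Let x ∈ ℝ^n be such that x - x⋆ lies in the row space of A, let i⁻ ∈ {1,...,m} satisfy A_{i⁻} x = b_{i⁻}, and let S = {1,...,m} \ {i⁻} be the non-repetitive selectable set. For i ∈ S let x'(i) denote the Kaczmarz update of x with row i. Then with uniform probabilities, (1/(m-1)) ∑_{i∈S} ‖x'(i) - x⋆‖² ≤ (1 - σ²/(m-1)) ‖x - x⋆‖². -/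
open RealInnerProductSpace

/-!
The error `e = x - x⋆` changes under a Kaczmarz step with row `a` into its component orthogonal
to `a`, so by Pythagoras the squared error drops by `⟪a, e⟫² / ‖a‖²`. Row `i⁻` is already
satisfied, i.e. `⟪A i⁻, e⟫ = 0`, so summing these drops over `S = [m] \ {i⁻}` gives the full
sum `∑ᵢ ⟪A i, e⟫² / ‖A i‖²`, which is at least `σ² ‖e‖²` because `e` lies in the row space.
-/

section Kaczmarz

variable {E : Type*} [NormedAddCommGroup E] [InnerProductSpace ℝ E]

theorem norm_sub_smul_inner_div_sq (a e : E) :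
    ‖e - (⟪a, e⟫ / ‖a‖ ^ 2) • a‖ ^ 2 = ‖e‖ ^ 2 - (⟪a, e⟫ / ‖a‖) ^ 2 := by
  rw [norm_sub_sq_real, real_inner_smul_right, norm_smul, Real.norm_eq_abs, mul_pow, sq_abs,
    real_inner_comm e a]
  rcases eq_or_ne a 0 with rfl | ha
  · simp
  · have : ‖a‖ ≠ 0 := norm_ne_zero_iff.mpr ha
    field_simp
    ring

theorem norm_kaczmarz_step_sub_sq (a x xstar : E) :
    ‖(x - ((⟪a, x⟫ - ⟪a, xstar⟫) / ‖a‖ ^ 2) • a) - xstar‖ ^ 2 =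
      ‖x - xstar‖ ^ 2 - (⟪a, x - xstar⟫ / ‖a‖) ^ 2 := by
  rw [← inner_sub_right, ← norm_sub_smul_inner_div_sq]
  congr 2
  abel

end Kaczmarz

theorem one_div_mul_le_one_sub_div_mul {c s a y : ℝ} (hc : 0 ≤ c) (ha : 0 ≤ a)
    (h : y ≤ c * a - s * a) : 1 / c * y ≤ (1 - s / c) * a := by
  rcases hc.eq_or_lt with rfl | hc
  · simpa using ha
  · calc 1 / c * y ≤ 1 / c * (c * a - s * a) := by gcongr
      _ = (1 - s / c) * a := by field_simp

theorem nssrk_one_step_uniform_general {m n : ℕ}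
    (A : Fin m → EuclideanSpace ℝ (Fin n))
    (xstar : EuclideanSpace ℝ (Fin n))
    (b : Fin m → ℝ) (hb : ∀ i, b i = ⟪A i, xstar⟫)
    (σ : ℝ)
    (hsv : ∀ v ∈ Submodule.span ℝ (Set.range A),
      σ ^ 2 * ‖v‖ ^ 2 ≤ ∑ i, (⟪A i, v⟫ / ‖A i‖) ^ 2)
    (x : EuclideanSpace ℝ (Fin n))
    (hx : x - xstar ∈ Submodule.span ℝ (Set.range A))
    (iprev : Fin m) (hiprev : ⟪A iprev, x⟫ = b iprev)
    (S : Finset (Fin m)) (hS : S = Finset.univ \ {iprev}) :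
    (1 / ((m : ℝ) - 1)) *
        ∑ i ∈ S, ‖(x - ((⟪A i, x⟫ - b i) / ‖A i‖ ^ 2) • A i) - xstar‖ ^ 2 ≤
      (1 - σ ^ 2 / ((m : ℝ) - 1)) * ‖x - xstar‖ ^ 2 := by
  rw [Finset.sdiff_singleton_eq_erase] at hS
  subst hS
  have hprev : ⟪A iprev, x - xstar⟫ = 0 := by rw [inner_sub_right, hiprev, hb, sub_self]
  have hcard : ((Finset.univ.erase iprev).card : ℝ) = (m : ℝ) - 1 := by
    rw [Finset.card_erase_of_mem (Finset.mem_univ _), Finset.card_univ, Fintype.card_fin,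
      Nat.cast_pred iprev.pos]
  have hm : (0 : ℝ) ≤ (m : ℝ) - 1 := by
    rw [← hcard]
    positivity
  apply one_div_mul_le_one_sub_div_mul hm (by positivity)
  simp_rw [hb, norm_kaczmarz_step_sub_sq]
  rw [Finset.sum_sub_distrib, Finset.sum_const, nsmul_eq_mul, hcard,
    Finset.sum_erase _ (by rw [hprev, zero_div, sq, zero_mul])]
  linarith [hsv _ hx]

/-- (Corollary 2 of the paper, iterations `k ≥ 1`.) For the
Non-Repetitive Selectable Set Randomized Kaczmarz method with uniform probabilities,
where the selectable set is `S = [m] \ {i⁻}` and the previously chosen row `i⁻`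
satisfies its equation, the expected squared error of the update satisfies
`(1/(m-1)) ∑_{i∈S} ‖x'(i) - x⋆‖² ≤ (1 - σ²/(m-1)) ‖x - x⋆‖²`. -/
theorem nssrk_one_step_uniform {m n : ℕ} (hm : 2 ≤ m)
    (A : Fin m → EuclideanSpace ℝ (Fin n)) (hA : ∀ i, A i ≠ 0)
    (xstar : EuclideanSpace ℝ (Fin n))
    (hxstar : xstar ∈ Submodule.span ℝ (Set.range A))
    (b : Fin m → ℝ) (hb : ∀ i, b i = ⟪A i, xstar⟫)
    (σ : ℝ) (hσ : 0 ≤ σ)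
    (hsv : ∀ v ∈ Submodule.span ℝ (Set.range A),
      σ ^ 2 * ‖v‖ ^ 2 ≤ ∑ i, (⟪A i, v⟫ / ‖A i‖) ^ 2)
    (x : EuclideanSpace ℝ (Fin n))
    (hx : x - xstar ∈ Submodule.span ℝ (Set.range A))
    (iprev : Fin m) (hiprev : ⟪A iprev, x⟫ = b iprev)
    (S : Finset (Fin m)) (hS : S = Finset.univ \ {iprev}) :
    (1 / ((m : ℝ) - 1)) *
        ∑ i ∈ S, ‖(x - ((⟪A i, x⟫ - b i) / ‖A i‖ ^ 2) • A i) - xstar‖ ^ 2 ≤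
      (1 - σ ^ 2 / ((m : ℝ) - 1)) * ‖x - xstar‖ ^ 2 :=
  nssrk_one_step_uniform_general A xstar b hb σ hsv x hx iprev hiprev S hS
end

section
/- Let A ∈ ℝ^{m×n} have no zero rows, let x⋆ ∈ ℝ^n lie in the row space of A, and set b = A x⋆. Let σ ≥ 0 be a constant such that ‖A v‖² ≥ σ² ‖v‖² for every v in the row space of A. Let x ∈ ℝ^n be such that x - x⋆ lies in the row space of A, and let S ⊆ {1,...,m} be a nonempty selectable set for x, i.e. i ∉ S implies A_i x = b_i. For i ∈ S let x'(i) denote the Kaczmarz update of x with row i. Then with probabilities proportional to squared row norms, ∑_{i∈S} (‖A_i‖² / ∑_{j∈S} ‖A_j‖²) ‖x'(i) - x⋆‖² ≤ (1 - σ² / ∑_{j∈S} ‖A_j‖²) ‖x - x⋆‖². -/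
open RealInnerProductSpace

/-!
Write `e = x - x⋆`. Since `bᵢ = ⟪Aᵢ, x⋆⟫`, the Kaczmarz update with row `i` is `x⋆` plus the
component of `e` orthogonal to `Aᵢ`, so its squared error is `‖e‖² - ⟪Aᵢ, e⟫² / ‖Aᵢ‖²`.
Averaging with weights `‖Aᵢ‖² / ∑_{j∈S} ‖Aⱼ‖²` cancels the row norms and leaves
`‖e‖² - (∑_{i∈S} ⟪Aᵢ, e⟫²) / ∑_{j∈S} ‖Aⱼ‖²`. Outside `S` the residual `⟪Aᵢ, e⟫` vanishes,
so the sum over `S` is the full `‖A e‖² ≥ σ² ‖e‖²`, because `e` lies in the row space.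
-/

section Kaczmarz

variable {E : Type*} [NormedAddCommGroup E] [InnerProductSpace ℝ E]

noncomputable def kaczmarzStep (a : E) (β : ℝ) (x : E) : E :=
  x - ((⟪a, x⟫ - β) / ‖a‖ ^ 2) • a

theorem kaczmarzStep_sub_of_inner (a x xstar : E) :
    kaczmarzStep a ⟪a, xstar⟫ x - xstar =
      (x - xstar) - (⟪a, x - xstar⟫ / ‖a‖ ^ 2) • a := by
  rw [kaczmarzStep, inner_sub_right]
  abel

theorem norm_kaczmarzStep_sub_sq (a x xstar : E) :
    ‖kaczmarzStep a ⟪a, xstar⟫ x - xstar‖ ^ 2 =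
      ‖x - xstar‖ ^ 2 - ⟪a, x - xstar⟫ ^ 2 / ‖a‖ ^ 2 := by
  rw [kaczmarzStep_sub_of_inner, norm_sub_inner_div_smul_sq]

theorem sum_rowNorm_weighted_norm_kaczmarzStep_sub_sq {ι : Type*} (A : ι → E) (S : Finset ι)
    (hS : ∑ j ∈ S, ‖A j‖ ^ 2 ≠ 0) (x xstar : E) :
    ∑ i ∈ S, (‖A i‖ ^ 2 / ∑ j ∈ S, ‖A j‖ ^ 2) * ‖kaczmarzStep (A i) ⟪A i, xstar⟫ x - xstar‖ ^ 2 =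
      ‖x - xstar‖ ^ 2 - (∑ i ∈ S, ⟪A i, x - xstar⟫ ^ 2) / ∑ j ∈ S, ‖A j‖ ^ 2 := by
  set T := ∑ j ∈ S, ‖A j‖ ^ 2
  have hterm : ∀ i ∈ S, (‖A i‖ ^ 2 / T) * ‖kaczmarzStep (A i) ⟪A i, xstar⟫ x - xstar‖ ^ 2 =
      (‖A i‖ ^ 2 / T) * ‖x - xstar‖ ^ 2 - ⟪A i, x - xstar⟫ ^ 2 / T := by
    intro i _
    rw [norm_kaczmarzStep_sub_sq]
    rcases eq_or_ne (A i) 0 with hi | hi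
    · simp [hi]
    have hi' : ‖A i‖ ≠ 0 := norm_ne_zero_iff.mpr hi
    field_simp
  rw [Finset.sum_congr rfl hterm, Finset.sum_sub_distrib, ← Finset.sum_mul, ← Finset.sum_div,
    div_self hS, one_mul, Finset.sum_div]

theorem sum_inner_sq_eq_of_inner_eq {ι : Type*} [Fintype ι] (A : ι → E) (S : Finset ι)
    (x xstar : E) (hS : ∀ i, i ∉ S → ⟪A i, x⟫ = ⟪A i, xstar⟫) :
    ∑ i ∈ S, ⟪A i, x - xstar⟫ ^ 2 = ∑ i, ⟪A i, x - xstar⟫ ^ 2 := by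
  refine Finset.sum_subset (Finset.subset_univ S) fun i _ hi => ?_
  rw [inner_sub_right, hS i hi, sub_self, sq, zero_mul]

end Kaczmarz

theorem ssrk_one_step_rownorm_general {m n : ℕ}
    (A : Fin m → EuclideanSpace ℝ (Fin n))
    (xstar : EuclideanSpace ℝ (Fin n))
    (b : Fin m → ℝ) (hb : ∀ i, b i = ⟪A i, xstar⟫)
    (σ : ℝ)
    (hsv : ∀ v ∈ Submodule.span ℝ (Set.range A),
      σ ^ 2 * ‖v‖ ^ 2 ≤ ∑ i, ⟪A i, v⟫ ^ 2)
    (x : EuclideanSpace ℝ (Fin n))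
    (hx : x - xstar ∈ Submodule.span ℝ (Set.range A))
    (S : Finset (Fin m))
    (hS : ∀ i, i ∉ S → ⟪A i, x⟫ = b i) :
    ∑ i ∈ S, (‖A i‖ ^ 2 / ∑ j ∈ S, ‖A j‖ ^ 2) *
        ‖(x - ((⟪A i, x⟫ - b i) / ‖A i‖ ^ 2) • A i) - xstar‖ ^ 2 ≤
      (1 - σ ^ 2 / ∑ j ∈ S, ‖A j‖ ^ 2) * ‖x - xstar‖ ^ 2 := by
  obtain rfl : b = fun i => ⟪A i, xstar⟫ := funext hb
  set T := ∑ j ∈ S, ‖A j‖ ^ 2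
  rcases eq_or_ne T 0 with hT | hT
  · -- every weight is `‖A i‖ ^ 2 / 0 = 0`, and the right side is `‖x - xstar‖ ^ 2`
    simp [hT]
  have hresidual : σ ^ 2 * ‖x - xstar‖ ^ 2 ≤ ∑ i ∈ S, ⟪A i, x - xstar⟫ ^ 2 := by
    rw [sum_inner_sq_eq_of_inner_eq A S x xstar hS]
    exact hsv _ hx
  calc ∑ i ∈ S, (‖A i‖ ^ 2 / T) * ‖kaczmarzStep (A i) ⟪A i, xstar⟫ x - xstar‖ ^ 2
      = ‖x - xstar‖ ^ 2 - (∑ i ∈ S, ⟪A i, x - xstar⟫ ^ 2) / T :=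
        sum_rowNorm_weighted_norm_kaczmarzStep_sub_sq A S hT x xstar
    _ ≤ ‖x - xstar‖ ^ 2 - σ ^ 2 * ‖x - xstar‖ ^ 2 / T := by
        gcongr
    _ = (1 - σ ^ 2 / T) * ‖x - xstar‖ ^ 2 := by ring

/-- (Corollary 3 of the paper.) With probabilities proportional to the
squared row norms, a constant `σ ≥ 0` satisfying `‖A v‖² ≥ σ² ‖v‖²` for all `v` in the
row space of `A`, and a nonempty selectable set `S` for the iterate `x`, the expected
squared error of the SSRK update satisfies
`∑_{i∈S} (‖Aᵢ‖²/∑_{j∈S} ‖Aⱼ‖²) ‖x'(i) - x⋆‖² ≤ (1 - σ²/∑_{j∈S} ‖Aⱼ‖²) ‖x - x⋆‖²`. -/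
theorem ssrk_one_step_rownorm {m n : ℕ}
    (A : Fin m → EuclideanSpace ℝ (Fin n)) (hA : ∀ i, A i ≠ 0)
    (xstar : EuclideanSpace ℝ (Fin n))
    (hxstar : xstar ∈ Submodule.span ℝ (Set.range A))
    (b : Fin m → ℝ) (hb : ∀ i, b i = ⟪A i, xstar⟫)
    (σ : ℝ) (hσ : 0 ≤ σ)
    (hsv : ∀ v ∈ Submodule.span ℝ (Set.range A),
      σ ^ 2 * ‖v‖ ^ 2 ≤ ∑ i, ⟪A i, v⟫ ^ 2)
    (x : EuclideanSpace ℝ (Fin n))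
    (hx : x - xstar ∈ Submodule.span ℝ (Set.range A))
    (S : Finset (Fin m)) (hSne : S.Nonempty)
    (hS : ∀ i, i ∉ S → ⟪A i, x⟫ = b i) :
    ∑ i ∈ S, (‖A i‖ ^ 2 / ∑ j ∈ S, ‖A j‖ ^ 2) *
        ‖(x - ((⟪A i, x⟫ - b i) / ‖A i‖ ^ 2) • A i) - xstar‖ ^ 2 ≤
      (1 - σ ^ 2 / ∑ j ∈ S, ‖A j‖ ^ 2) * ‖x - xstar‖ ^ 2 :=
  ssrk_one_step_rownorm_general A xstar b hb σ hsv x hx S hS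
end

section
/- Let A ∈ ℝ^{m×n} have no zero rows and let G be the non-orthogonality graph of A: the simple graph on vertex set {1,...,m} in which distinct vertices i and j are adjacent if and only if ⟨A_i, A_j⟩ ≠ 0. Let S ⊆ {1,...,m} be such that its complement S^C = {1,...,m} \ S is an independent set in G. Let i ∈ S and let S' = (S ∪ {j : ⟨A_i, A_j⟩ ≠ 0}) \ {i} be the Gramian selectable set update. Then the complement of S' is also an independent set in G. -/
/-! The complement of `S'` consists of `i` together with vertices outside `S` that are orthogonal
to `Aᵢ`. These vertices form an independent set, being a subset of `Sᶜ`, and `i` is adjacent to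
none of them. -/

open RealInnerProductSpace

/-- The non-orthogonality graph of a matrix with rows `A₁,…,A_m`: distinct row indices
`i` and `j` are adjacent if and only if `⟪Aᵢ, Aⱼ⟫ ≠ 0`. -/
def nonOrthGraph {m n : ℕ} (A : Fin m → EuclideanSpace ℝ (Fin n)) :
    SimpleGraph (Fin m) where
  Adj i j := i ≠ j ∧ ⟪A i, A j⟫ ≠ 0
  symm := by
    constructor
    intro i j h
    exact ⟨h.1.symm, by rw [real_inner_comm]; exact h.2⟩
  loopless := ⟨fun i h => h.1 rfl⟩

/-- A set of vertices is independent when no two of its elements are adjacent. -/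
def IsIndepSet {V : Type*} (G : SimpleGraph V) (s : Set V) : Prop :=
  s.Pairwise fun a b => ¬ G.Adj a b

namespace IsIndepSet

variable {V : Type*} {G : SimpleGraph V} {s t : Set V}

theorem mono (ht : IsIndepSet G t) (hst : s ⊆ t) : IsIndepSet G s :=
  Set.Pairwise.mono hst ht

theorem insert_of_forall_not_adj (hs : IsIndepSet G s) {a : V} (ha : ∀ b ∈ s, ¬ G.Adj a b) :
    IsIndepSet G (insert a s) :=
  Set.pairwise_insert.mpr ⟨hs, fun b hb _ => ⟨ha b hb, fun hadj => ha b hb hadj.symm⟩⟩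

end IsIndepSet

theorem nonOrthGraph_not_adj_of_inner_eq_zero {m n : ℕ} {A : Fin m → EuclideanSpace ℝ (Fin n)}
    {i j : Fin m} (h : ⟪A i, A j⟫ = 0) : ¬ (nonOrthGraph A).Adj i j :=
  fun hadj => hadj.2 h

theorem gssrk_update_complement_indep_general {m n : ℕ}
    (A : Fin m → EuclideanSpace ℝ (Fin n))
    (S : Finset (Fin m)) (hS : IsIndepSet (nonOrthGraph A) ↑(Sᶜ))
    (i : Fin m)
    (S' : Finset (Fin m))
    (hS' : ∀ j, j ∈ S' ↔ (j ∈ S ∨ ⟪A i, A j⟫ ≠ 0) ∧ j ≠ i) :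
    IsIndepSet (nonOrthGraph A) ↑(S'ᶜ) := by
  have hcompl : (↑(S'ᶜ) : Set (Fin m)) ⊆ insert i (↑(Sᶜ) ∩ {j | ⟪A i, A j⟫ = 0}) := by
    intro j hj
    simp only [Finset.coe_compl, Set.mem_compl_iff, Finset.mem_coe, hS'] at hj
    simp only [Set.mem_insert_iff, Set.mem_inter_iff, Finset.coe_compl, Set.mem_compl_iff,
      Finset.mem_coe, Set.mem_ofPred_eq]
    tauto
  refine IsIndepSet.mono (IsIndepSet.insert_of_forall_not_adj (hS.mono Set.inter_subset_left) ?_)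
    hcompl
  exact fun j hj => nonOrthGraph_not_adj_of_inner_eq_zero hj.2

/-- The Gramian selectable set update preserves independence of the
complement: if the complement of `S` is an independent set in the non-orthogonality
graph of `A`, `i ∈ S`, and `S' = (S ∪ {j : ⟪Aᵢ, Aⱼ⟫ ≠ 0}) \ {i}`, then the complement
of `S'` is also an independent set in the non-orthogonality graph. -/
theorem gssrk_update_complement_indep {m n : ℕ}
    (A : Fin m → EuclideanSpace ℝ (Fin n)) (hA : ∀ i, A i ≠ 0)
    (S : Finset (Fin m)) (hS : IsIndepSet (nonOrthGraph A) ↑(Sᶜ))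
    (i : Fin m) (hi : i ∈ S)
    (S' : Finset (Fin m))
    (hS' : ∀ j, j ∈ S' ↔ (j ∈ S ∨ ⟪A i, A j⟫ ≠ 0) ∧ j ≠ i) :
    IsIndepSet (nonOrthGraph A) ↑(S'ᶜ) :=
  gssrk_update_complement_indep_general A S hS i S' hS'
end

section
/- Let A ∈ ℝ^{m×n} have no zero rows and let M ⊆ {1,...,m} be an independent set in the non-orthogonality graph of A, i.e. ⟨A_i, A_j⟩ = 0 for all distinct i, j ∈ M. Enumerate M as m_1, m_2, ..., m_t, start with S_0 = {1,...,m}, and for each step 0 ≤ k < t apply the Gramian selectable set update S_{k+1} = (S_k ∪ {j : ⟨A_{m_{k+1}}, A_j⟩ ≠ 0}) \ {m_{k+1}}. Then S_t = {1,...,m} \ M; in particular |S_t| = m - |M|, so choosing M to be a maximum independent set shows the lower bound m - α on the size of the Gramian selectable set is attained, where α is the independence number of the non-orthogonality graph. -/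
open RealInnerProductSpace

/-! Only the rows selected so far are ever removed: a selected row `f i` can re-enter the
selectable set only through a later row `f k` not orthogonal to it, which independence of `M`
rules out. Hence after `k` steps the selectable set is exactly the complement of
`{f i | i < k}`. -/

theorem mem_selectable_iff {ι : Type*} {t : ℕ} {r : ι → ι → Prop} {f : Fin t → ι}
    {S : ℕ → Finset ι} (hf : (Set.range f).Pairwise fun i j => ¬ r i j) (h0 : ∀ j, j ∈ S 0)
    (hstep : ∀ k : Fin t, ∀ j, j ∈ S ((k : ℕ) + 1) ↔ (j ∈ S k ∨ r (f k) j) ∧ j ≠ f k) :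
    ∀ k ≤ t, ∀ j, j ∈ S k ↔ ∀ i : Fin t, (i : ℕ) < k → f i ≠ j := by
  intro k hk j
  induction k with
  | zero => simp [h0]
  | succ k ih =>
    rw [hstep ⟨k, hk⟩, ih (by omega)]
    constructor
    · rintro ⟨hprev | hadj, hne⟩ i hi rfl
      · rcases (Nat.lt_succ_iff_lt_or_eq.mp hi) with hi | rfl
        · exact hprev i hi rfl
        · exact hne rfl
      · exact hf ⟨⟨k, hk⟩, rfl⟩ ⟨i, rfl⟩ (Ne.symm hne) hadj
    · intro hall
      exact ⟨.inl fun i hi => hall i (by omega), fun h => hall ⟨k, hk⟩ k.lt_succ_self h.symm⟩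

theorem gssrk_lower_bound_attained_general {m n t : ℕ}
    (A : Fin m → EuclideanSpace ℝ (Fin n))
    (M : Finset (Fin m))
    (hM : ∀ i ∈ M, ∀ j ∈ M, i ≠ j → ⟪A i, A j⟫ = 0)
    (f : Fin t → Fin m)
    (hfM : Finset.image f Finset.univ = M)
    (Ss : ℕ → Finset (Fin m)) (hS0 : Ss 0 = Finset.univ)
    (hstep : ∀ k : Fin t, ∀ j,
      j ∈ Ss ((k : ℕ) + 1) ↔ (j ∈ Ss (k : ℕ) ∨ ⟪A (f k), A j⟫ ≠ 0) ∧ j ≠ f k) :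
    Ss t = Finset.univ \ M ∧ (Ss t).card = m - M.card := by
  have hindep : (Set.range f).Pairwise fun i j => ¬ ⟪A i, A j⟫ ≠ 0 := by
    rintro _ ⟨a, rfl⟩ _ ⟨b, rfl⟩ hab
    exact not_not.mpr (hM _ (hfM ▸ Finset.mem_image_of_mem f (Finset.mem_univ a)) _
      (hfM ▸ Finset.mem_image_of_mem f (Finset.mem_univ b)) hab)
  have hSt : Ss t = Finset.univ \ M := by
    ext j
    rw [mem_selectable_iff hindep (by simp [hS0]) hstep t le_rfl j, ← hfM]
    simp
  refine ⟨hSt, ?_⟩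
  rw [hSt, ← Finset.compl_eq_univ_sdiff, Finset.card_compl, Fintype.card_fin]

/-- (Proposition 1 of the paper.) Let `M` be an independent set in the
non-orthogonality graph of `A` (i.e. `⟪Aᵢ, Aⱼ⟫ = 0` for all distinct `i, j ∈ M`),
enumerated as `f 0, f 1, …, f (t-1)`. Starting from `S₀ = {1,…,m}` and applying the
Gramian selectable set update `S_{k+1} = (S_k ∪ {j : ⟪A_{f k}, A_j⟫ ≠ 0}) \ {f k}` for
each `k < t`, the final selectable set is `S_t = {1,…,m} \ M`; in particular
`|S_t| = m - |M|`, so the lower bound on the size of the Gramian selectable set is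
attained when `M` is a maximum independent set. -/
theorem gssrk_lower_bound_attained {m n t : ℕ}
    (A : Fin m → EuclideanSpace ℝ (Fin n)) (hA : ∀ i, A i ≠ 0)
    (M : Finset (Fin m))
    (hM : ∀ i ∈ M, ∀ j ∈ M, i ≠ j → ⟪A i, A j⟫ = 0)
    (f : Fin t → Fin m) (hf : Function.Injective f)
    (hfM : Finset.image f Finset.univ = M)
    (Ss : ℕ → Finset (Fin m)) (hS0 : Ss 0 = Finset.univ)
    (hstep : ∀ k : Fin t, ∀ j,
      j ∈ Ss ((k : ℕ) + 1) ↔ (j ∈ Ss (k : ℕ) ∨ ⟪A (f k), A j⟫ ≠ 0) ∧ j ≠ f k) :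
    Ss t = Finset.univ \ M ∧ (Ss t).card = m - M.card :=
  gssrk_lower_bound_attained_general A M hM f hfM Ss hS0 hstep
end
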